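/- arXiv:1508.03613 — 2 statements merged into one kernel-verified Lean document; each statement's English description precedes it below -/
import Mathlib

section
/- Let (M,·) be a moving semigroup and let A ⊆ M be IIP. Then there exists a nonprincipal idempotent ultrafilter 𝓤 on M with A ∈ 𝓤. -/
open Filter FirstOrder FirstOrder.Language

attribute [local instance] Ultrafilter.mul

/-! ## Combinatorial notions in a semigroup -/

/-- `X` is an IP set: it contains `FP u` (all finite products, in increasing order of indices,
of distinct terms) of some sequence `u`. -/
def IsIP {M : Type*} [Semigroup M] (X : Set M) : Prop :=
  ∃ u : Stream' M, Hindman.FP u ⊆ X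

/-- `X` is IIP (infinitely IP): it contains an infinite set of the form `FP u`. -/
def IsIIP {M : Type*} [Semigroup M] (X : Set M) : Prop :=
  ∃ u : Stream' M, Hindman.FP u ⊆ X ∧ (Hindman.FP u).Infinite

/-- `X` is DIP (distinctly IP): it contains `FP u` for an injective sequence `u`. -/
def IsDIP {M : Type*} [Semigroup M] (X : Set M) : Prop :=
  ∃ u : Stream' M, Function.Injective u ∧ Hindman.FP u ⊆ X

/-- An ultrafilter is nonprincipal if it is not of the form `{A | a ∈ A}` for any `a`. -/
def Ultrafilter.Nonprincipal {M : Type*} (U : Ultrafilter M) : Prop :=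
  ∀ a : M, U ≠ pure a

/-- A semigroup is moving if the product of two nonprincipal ultrafilters
(for the ultrafilter product `A ∈ U * V ↔ {m | {n | m * n ∈ A} ∈ V} ∈ U`) is nonprincipal. -/
def IsMoving (M : Type*) [Semigroup M] : Prop :=
  ∀ U V : Ultrafilter M, U.Nonprincipal → V.Nonprincipal → (U * V).Nonprincipal

/-! ## Types over a semigroup structure -/

/-- Formulas in one free variable, with parameters from `M`. -/
abbrev Form1 (L : Language) (M : Type*) := L.Formula (M ⊕ Fin 1)

/-- Formulas in two free variables (`x` and `y`), with parameters from `M`. -/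
abbrev Form2 (L : Language) (M : Type*) := L.Formula (M ⊕ Fin 2)

/-- Realization of a 1-variable formula with parameters at the point `a`. -/
def Realize1 {L : Language} {M : Type*} (S : L.Structure M) (φ : Form1 L M) (a : M) : Prop :=
  @Formula.Realize L M S _ φ (Sum.elim id fun _ => a)

/-- Realization of a 2-variable formula with parameters at the pair `(a, b)`. -/
def Realize2 {L : Language} {M : Type*} (S : L.Structure M) (φ : Form2 L M) (a b : M) : Prop :=
  @Formula.Realize L M S _ φ (Sum.elim id ![a, b])

/-- A complete 1-type over the structure `S` (with parameters for all elements of `M`):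
a complete, finitely satisfiable (in `S`) set of formulas in one free variable. -/
def IsCompleteType1 {L : Language} {M : Type*} (S : L.Structure M)
    (p : Set (Form1 L M)) : Prop :=
  (∀ φ : Form1 L M, φ ∈ p ↔ φ.not ∉ p) ∧
    ∀ s : Finset (Form1 L M), ↑s ⊆ p → ∃ a : M, ∀ φ ∈ s, Realize1 S φ a

/-- A complete 2-type over the structure `S` (with parameters for all elements of `M`). -/
def IsCompleteType2 {L : Language} {M : Type*} (S : L.Structure M)
    (q : Set (Form2 L M)) : Prop :=
  (∀ φ : Form2 L M, φ ∈ q ↔ φ.not ∉ q) ∧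
    ∀ s : Finset (Form2 L M), ↑s ⊆ q → ∃ a b : M, ∀ φ ∈ s, Realize2 S φ a b

/-- `substX u φ` is `φ(u, y)`: the element `u` is substituted for the variable `x`. -/
def substX {L : Language} {M : Type*} (u : M) (φ : Form2 L M) : Form2 L M :=
  φ.subst (Sum.elim (fun m => Term.var (Sum.inl m))
    ![Term.var (Sum.inl u), Term.var (Sum.inr 1)])

/-- A 2-type `q(x, y)` is independent if for every `φ(x, y) ∈ q` there is `u ∈ M` with
`φ(u, y) ∈ q`. -/
def IsIndependent {L : Language} {M : Type*} (q : Set (Form2 L M)) : Prop :=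
  ∀ φ ∈ q, ∃ u : M, substX u φ ∈ q

/-- `toX φ` views the 1-variable formula `φ` as a 2-variable formula `φ(x)`. -/
def toX {L : Language} {M : Type*} (φ : Form1 L M) : Form2 L M :=
  φ.subst (Sum.elim (fun m => Term.var (Sum.inl m)) fun _ => Term.var (Sum.inr 0))

/-- `toY φ` views the 1-variable formula `φ` as a 2-variable formula `φ(y)`. -/
def toY {L : Language} {M : Type*} (φ : Form1 L M) : Form2 L M :=
  φ.subst (Sum.elim (fun m => Term.var (Sum.inl m)) fun _ => Term.var (Sum.inr 1))

/-- `toXY f φ` is `φ(x · y)`, where `f` is the distinguished binary function symbol. -/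
def toXY {L : Language} {M : Type*} (f : L.Functions 2) (φ : Form1 L M) : Form2 L M :=
  φ.subst (Sum.elim (fun m => Term.var (Sum.inl m))
    fun _ => Term.func f ![Term.var (Sum.inr 0), Term.var (Sum.inr 1)])

/-- A complete 1-type `p` over `S` is idempotent (with respect to the binary function symbol `f`
interpreted as the semigroup operation) if there is an independent complete 2-type `q(x, y)` with
`p(x) ⊆ q`, `p(y) ⊆ q` and `p(x · y) ⊆ q`. -/
def IsIdempotentType {L : Language} {M : Type*} (S : L.Structure M) (f : L.Functions 2)
    (p : Set (Form1 L M)) : Prop :=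
  IsCompleteType1 S p ∧
    ∃ q : Set (Form2 L M), IsCompleteType2 S q ∧ IsIndependent q ∧
      (∀ φ ∈ p, toX φ ∈ q) ∧ (∀ φ ∈ p, toY φ ∈ q) ∧ (∀ φ ∈ p, toXY f φ ∈ q)

/-- A 1-type over `S` is principal if it is realized by an element of `M`. -/
def IsPrincipalType {L : Language} {M : Type*} (S : L.Structure M)
    (p : Set (Form1 L M)) : Prop :=
  ∃ a : M, ∀ φ ∈ p, Realize1 S φ a


/-! The nonprincipal ultrafilters containing every tail `FP (a.drop n)` of an infinite FP-set form
a closed subset of the Stone–Čech compactification. It is nonempty because every tail is still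
infinite, and it is a subsemigroup because `M` is moving and, by `Hindman.FP.mul`, each product
`m * m'` with `m ∈ FP a` and `m'` in a late enough tail is again in `FP a`. Ellis's theorem then
gives an idempotent in it. -/

attribute [local instance] Ultrafilter.semigroup

theorem Ultrafilter.nonprincipal_iff_le_cofinite {α : Type*} (U : Ultrafilter α) :
    U.Nonprincipal ↔ (U : Filter α) ≤ cofinite := by
  refine ⟨fun hU => (le_cofinite_or_eq_pure U).resolve_right fun ⟨a, ha⟩ => hU a ha, ?_⟩
  rintro hU a rfl
  simpa using le_cofinite_iff_compl_singleton_mem.mp hU a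

theorem Ultrafilter.isClosed_setOf_coe_le {α : Type*} (F : Filter α) :
    IsClosed {U : Ultrafilter α | ↑U ≤ F} := by
  have : {U : Ultrafilter α | ↑U ≤ F} = ⋂ s ∈ F, {U | s ∈ U} := by
    ext U
    simp only [Set.mem_ofPred_eq, Set.mem_iInter]
    exact ⟨fun h s hs => h hs, fun h s hs => h s hs⟩
  rw [this]
  exact isClosed_biInter fun s _ => ultrafilter_isClosed_basic s

namespace Hindman

variable {M : Type*} [Semigroup M]

theorem FP_subset_insert_head (a : Stream' M) :
    FP a ⊆ insert a.head (FP a.tail ∪ (a.head * ·) '' FP a.tail) := by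
  rintro m (_ | ⟨_, _, hm⟩ | ⟨_, m', hm'⟩)
  · exact Set.mem_insert _ _
  · exact Set.mem_insert_of_mem _ (Or.inl hm)
  · exact Set.mem_insert_of_mem _ (Or.inr ⟨m', hm', rfl⟩)

theorem FP_tail_infinite {a : Stream' M} (h : (FP a).Infinite) : (FP a.tail).Infinite :=
  fun hfin => h <| ((hfin.union (hfin.image _)).insert _).subset (FP_subset_insert_head a)

theorem FP_drop_infinite {a : Stream' M} (h : (FP a).Infinite) (n : ℕ) :
    (FP (a.drop n)).Infinite := by
  induction n with
  | zero => exact h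
  | succ n ih => exact Stream'.tail_drop' ▸ FP_tail_infinite ih

theorem antitone_FP_drop (a : Stream' M) : Antitone fun n => FP (a.drop n) := by
  intro m n hmn
  obtain ⟨k, rfl⟩ := Nat.exists_eq_add_of_le hmn
  simpa only [Stream'.drop_drop] using FP_drop_subset_FP (a.drop m) k

theorem neBot_cofinite_inf_iInf_FP_drop {a : Stream' M} (h : (FP a).Infinite) :
    (cofinite ⊓ ⨅ n, 𝓟 (FP (a.drop n))).NeBot := by
  rw [inf_iInf]
  refine iInf_neBot_of_directed' ?_ fun n =>
    cofinite_inf_principal_neBot_iff.mpr (FP_drop_infinite h n)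
  exact Antitone.directed_ge fun m n hmn =>
    inf_le_inf_left _ (principal_mono.mpr (antitone_FP_drop a hmn))

theorem FP_drop_mem_mul {a : Stream' M} {U V : Ultrafilter M}
    (hU : ∀ n, FP (a.drop n) ∈ U) (hV : ∀ n, FP (a.drop n) ∈ V) (n : ℕ) :
    FP (a.drop n) ∈ U * V := by
  show ∀ᶠ m in ↑(U * V), m ∈ FP (a.drop n)
  rw [Ultrafilter.eventually_mul]
  filter_upwards [hU n] with m hm
  obtain ⟨k, hk⟩ := FP.mul hm
  filter_upwards [hV (k + n)] with m' hm'
  exact hk m' (by rwa [Stream'.drop_drop, add_comm])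

end Hindman

/-- in a moving semigroup, every IIP set belongs to some nonprincipal
idempotent ultrafilter. -/
theorem mem_nonprincipal_idempotent_of_isIIP {M : Type*} [Semigroup M] (hM : IsMoving M)
    (A : Set M) (hA : IsIIP A) :
    ∃ U : Ultrafilter M, U.Nonprincipal ∧ U * U = U ∧ A ∈ U := by
  obtain ⟨a, haA, hinf⟩ := hA
  set F : Filter M := cofinite ⊓ ⨅ n, 𝓟 (Hindman.FP (a.drop n))
  have mem_iff (U : Ultrafilter M) :
      ↑U ≤ F ↔ U.Nonprincipal ∧ ∀ n, Hindman.FP (a.drop n) ∈ U := by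
    simp only [F, le_inf_iff, le_iInf_iff, le_principal_iff, Ultrafilter.mem_coe,
      U.nonprincipal_iff_le_cofinite]
  have hF := Hindman.neBot_cofinite_inf_iInf_FP_drop hinf
  obtain ⟨U, hU, U_idem⟩ := exists_idempotent_in_compact_subsemigroup
    Ultrafilter.continuous_mul_left {U : Ultrafilter M | ↑U ≤ F}
    ⟨Ultrafilter.of F, Ultrafilter.of_le F⟩ (Ultrafilter.isClosed_setOf_coe_le F).isCompact
    fun U hU V hV => by
      rw [Set.mem_ofPred_eq, mem_iff] at hU hV ⊢
      exact ⟨hM U V hU.1 hV.1, Hindman.FP_drop_mem_mul hU.2 hV.2⟩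
  rw [Set.mem_ofPred_eq, mem_iff] at hU
  exact ⟨U, hU.1, U_idem, mem_of_superset (hU.2 0) haA⟩
end

section
/- Let (M,·) be a countable semigroup and suppose that for every semigroup structure 𝓜 based on (M,·) in a countable language and every 𝓜-definable IIP set X ⊆ M there is a nonprincipal idempotent complete 1-type over 𝓜 containing the formula defining X. Then (M,·) is really Hindman: whenever X ⊆ M is IIP and X = Y ∪ Z, one of Y or Z is DIP. -/
open Filter FirstOrder FirstOrder.Language

attribute [local instance] Ultrafilter.mul

/-! Idempotence of `p` yields that every `θ ∈ p` has a realization `u` with `θ(u · y) ∈ p`.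
This is exactly what the Galvin–Glazer construction needs from the filter generated by the sets
defined by formulas of `p`: from a large set `A` pick `u ∈ A` with `u⁻¹A` large, pass to
`A ∩ u⁻¹A ∖ {u}`, and repeat. Nonprincipality makes the cofinite sets large, which keeps the
chosen elements distinct. For a cover `X = Y ∪ Z`, completeness of `p` makes `Y` or its
complement large, so one of `Y`, `Z` contains a large set. -/

namespace Hindman

theorem FP_drop_subset_of_mul_mem {M : Type*} [Semigroup M] {a : Stream' M} {S : ℕ → Set M}
    (ha : ∀ n, a.get n ∈ S n) (hS : ∀ n, S (n + 1) ⊆ S n ∩ {m | a.get n * m ∈ S n}) (n : ℕ) :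
    FP (a.drop n) ⊆ S n := by
  suffices ∀ b m, m ∈ FP b → ∀ n, b = a.drop n → m ∈ S n from fun m hm => this _ m hm n rfl
  intro b m hm
  induction hm with
  | head' b => rintro n rfl; exact Stream'.head_drop a n ▸ ha n
  | tail' b m _ ih => rintro n rfl; exact (hS n (ih (n + 1) Stream'.tail_drop')).1
  | cons' b m _ ih =>
    rintro n rfl
    exact Stream'.head_drop a n ▸ (hS n (ih (n + 1) Stream'.tail_drop')).2

theorem exists_injective_FP_subset_of_le_cofinite {M : Type*} [Semigroup M] {F : Filter M}
    (hF : ∀ s ∈ F, ∃ m ∈ s, ∀ᶠ m' in F, m * m' ∈ s) (hcof : F ≤ cofinite) {s₀ : Set M}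
    (hs₀ : s₀ ∈ F) : ∃ a : Stream' M, Function.Injective a ∧ FP a ⊆ s₀ := by
  obtain ⟨m₀, -⟩ := hF s₀ hs₀
  have : Nonempty M := ⟨m₀⟩
  choose! elem elem_mem elem_large using hF
  let S : ℕ → Set M := fun n =>
    Nat.rec s₀ (fun _ s => s ∩ {m | elem s * m ∈ s} ∩ {elem s}ᶜ) n
  have S_mem : ∀ n, S n ∈ F := by
    intro n
    induction n with
    | zero => exact hs₀
    | succ n ih =>
      exact inter_mem (inter_mem ih (elem_large _ ih))
        (le_cofinite_iff_compl_singleton_mem.1 hcof _)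
  let a : Stream' M := fun n => elem (S n)
  have ha : ∀ n, a.get n ∈ S n := fun n => elem_mem _ (S_mem n)
  have S_succ : ∀ n, S (n + 1) = S n ∩ {m | a.get n * m ∈ S n} ∩ {a.get n}ᶜ := fun n => rfl
  have S_anti : Antitone S := antitone_nat_of_succ_le fun n =>
    (S_succ n).subset.trans (Set.inter_subset_left.trans Set.inter_subset_left)
  refine ⟨a, Function.Injective.of_lt_imp_ne fun n m hnm => ?_,
    FP_drop_subset_of_mul_mem ha (fun n => (S_succ n).subset.trans Set.inter_subset_left) 0⟩
  exact fun h => ((S_succ n).subset (S_anti hnm (ha m))).2 h.symm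

end Hindman

namespace FirstOrder.Language

section FinSatComplete

variable {L : Language} {M α W : Type*} [L.Structure M] {v : W → α → M}
  {p : Set (L.Formula α)} {φ ψ : L.Formula α}

/-- `v` parametrizes the admissible valuations: `v a = Sum.elim id (fun _ => a)` for complete
1-types over `M`, and `v (a, b) = Sum.elim id ![a, b]` for complete 2-types. -/
def IsFinSatComplete (v : W → α → M) (p : Set (L.Formula α)) : Prop :=
  (∀ φ, φ ∈ p ↔ φ.not ∉ p) ∧ ∀ s : Finset (L.Formula α), ↑s ⊆ p → ∃ w, ∀ φ ∈ s, φ.Realize (v w)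

namespace IsFinSatComplete

theorem mem_or_not_mem (hp : IsFinSatComplete v p) (φ : L.Formula α) : φ ∈ p ∨ φ.not ∈ p :=
  or_iff_not_imp_left.2 fun h => by_contra fun h' => h ((hp.1 φ).2 h')

theorem exists_realize (hp : IsFinSatComplete v p) (hφ : φ ∈ p) : ∃ w, φ.Realize (v w) := by
  classical
  obtain ⟨w, hw⟩ := hp.2 {φ} (by simpa using hφ)
  exact ⟨w, hw φ (Finset.mem_singleton_self φ)⟩

theorem inf_mem (hp : IsFinSatComplete v p) (hφ : φ ∈ p) (hψ : ψ ∈ p) : φ ⊓ ψ ∈ p := by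
  classical
  refine (hp.mem_or_not_mem _).resolve_right fun hn => ?_
  obtain ⟨w, hw⟩ := hp.2 {φ, ψ, (φ ⊓ ψ).not} (by simp [Set.insert_subset_iff, hφ, hψ, hn])
  exact Formula.realize_not.1 (hw _ (by simp))
    (Formula.realize_inf.2 ⟨hw φ (by simp), hw ψ (by simp)⟩)

theorem exists_realize_and (hp : IsFinSatComplete v p) (hφ : φ ∈ p) (hψ : ψ ∈ p) :
    ∃ w, φ.Realize (v w) ∧ ψ.Realize (v w) :=
  (hp.exists_realize (hp.inf_mem hφ hψ)).imp fun _ => Formula.realize_inf.1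

theorem mem_of_imp (hp : IsFinSatComplete v p) (hφ : φ ∈ p)
    (h : ∀ w, φ.Realize (v w) → ψ.Realize (v w)) : ψ ∈ p := by
  refine (hp.mem_or_not_mem ψ).resolve_right fun hn => ?_
  obtain ⟨w, hφw, hψw⟩ := hp.exists_realize_and hφ hn
  exact Formula.realize_not.1 hψw (h w hφw)

theorem top_mem (hp : IsFinSatComplete v p) : ⊤ ∈ p := by
  refine (hp.mem_or_not_mem ⊤).resolve_right fun hn => ?_
  obtain ⟨w, hw⟩ := hp.exists_realize hn
  exact Formula.realize_not.1 hw (Formula.realize_top.2 trivial)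

end IsFinSatComplete

end FinSatComplete

end FirstOrder.Language

section TypeFilter

variable {L : Language} {M : Type*} {S : L.Structure M} {f : L.Functions 2}
  {p : Set (Form1 L M)} {q : Set (Form2 L M)}

/-- `leftShift f u φ` is `φ(u · x)`. -/
def leftShift (f : L.Functions 2) (u : M) (φ : Form1 L M) : Form1 L M :=
  φ.subst (Sum.elim (fun m => Term.var (Sum.inl m))
    fun _ => Term.func f ![Term.var (Sum.inl u), Term.var (Sum.inr 0)])

theorem IsCompleteType1.isFinSatComplete (hp : IsCompleteType1 S p) :
    @IsFinSatComplete L M _ M S (fun a => Sum.elim id fun _ => a) p :=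
  hp

theorem IsCompleteType2.isFinSatComplete (hq : IsCompleteType2 S q) :
    @IsFinSatComplete L M _ (M × M) S (fun w => Sum.elim id ![w.1, w.2]) q :=
  ⟨hq.1, fun s hs => let ⟨a, b, h⟩ := hq.2 s hs; ⟨(a, b), h⟩⟩

theorem realize2_inf (φ ψ : Form2 L M) (a b : M) :
    Realize2 S (φ ⊓ ψ) a b ↔ Realize2 S φ a b ∧ Realize2 S ψ a b :=
  @Formula.realize_inf L M S _ _ _ _

theorem realize1_inf (φ ψ : Form1 L M) (a : M) :
    Realize1 S (φ ⊓ ψ) a ↔ Realize1 S φ a ∧ Realize1 S ψ a :=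
  @Formula.realize_inf L M S _ _ _ _

theorem realize1_not (φ : Form1 L M) (a : M) : Realize1 S φ.not a ↔ ¬Realize1 S φ a :=
  @Formula.realize_not L M S _ _ _

theorem realize2_substX (u : M) (φ : Form2 L M) (a b : M) :
    Realize2 S (substX u φ) a b ↔ Realize2 S φ u b := by
  let _ := S
  refine BoundedFormula.realize_subst.trans (iff_of_eq (congrArg₂ _ ?_ rfl))
  funext x
  rcases x with m | i
  · rfl
  · fin_cases i <;> rfl

theorem realize2_toX (φ : Form1 L M) (a b : M) : Realize2 S (toX φ) a b ↔ Realize1 S φ a := by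
  let _ := S
  refine BoundedFormula.realize_subst.trans (iff_of_eq (congrArg₂ _ ?_ rfl))
  funext x
  rcases x with m | i <;> rfl

theorem realize2_toY (φ : Form1 L M) (a b : M) : Realize2 S (toY φ) a b ↔ Realize1 S φ b := by
  let _ := S
  refine BoundedFormula.realize_subst.trans (iff_of_eq (congrArg₂ _ ?_ rfl))
  funext x
  rcases x with m | i <;> rfl

theorem realize2_toXY [Mul M] (hf : ∀ x y : M, S.funMap f ![x, y] = x * y) (φ : Form1 L M)
    (a b : M) : Realize2 S (toXY f φ) a b ↔ Realize1 S φ (a * b) := by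
  let _ := S
  refine BoundedFormula.realize_subst.trans (iff_of_eq (congrArg₂ _ ?_ rfl))
  funext x
  rcases x with m | i
  · rfl
  · rw [← hf]
    exact congrArg _ (funext fun j => by fin_cases j <;> rfl)

theorem realize1_leftShift [Mul M] (hf : ∀ x y : M, S.funMap f ![x, y] = x * y) (u : M)
    (φ : Form1 L M) (a : M) : Realize1 S (leftShift f u φ) a ↔ Realize1 S φ (u * a) := by
  let _ := S
  refine BoundedFormula.realize_subst.trans (iff_of_eq (congrArg₂ _ ?_ rfl))
  funext x
  rcases x with m | i
  · rfl
  · rw [← hf]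
    exact congrArg _ (funext fun j => by fin_cases j <;> rfl)

theorem IsCompleteType1.mem_of_toY_mem (hp : IsCompleteType1 S p) (hq : IsCompleteType2 S q)
    (hY : ∀ φ ∈ p, toY φ ∈ q) {φ : Form1 L M} (h : toY φ ∈ q) : φ ∈ p := by
  refine (hp.isFinSatComplete.mem_or_not_mem φ).resolve_right fun hn => ?_
  obtain ⟨⟨a, b⟩, hφ, hnφ⟩ := hq.isFinSatComplete.exists_realize_and h (hY _ hn)
  exact (realize1_not φ b).1 ((realize2_toY _ a b).1 hnφ) ((realize2_toY φ a b).1 hφ)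

def IsCompleteType1.filter (hp : IsCompleteType1 S p) : Filter M where
  sets := {A | ∃ φ ∈ p, {a | Realize1 S φ a} ⊆ A}
  univ_sets := ⟨⊤, hp.isFinSatComplete.top_mem, Set.subset_univ _⟩
  sets_of_superset := fun ⟨φ, hφ, hA⟩ hAB => ⟨φ, hφ, hA.trans hAB⟩
  inter_sets := fun ⟨φ, hφ, hA⟩ ⟨ψ, hψ, hB⟩ =>
    ⟨φ ⊓ ψ, hp.isFinSatComplete.inf_mem hφ hψ, fun _ ha =>
      ⟨hA ((realize1_inf φ ψ _).1 ha).1, hB ((realize1_inf φ ψ _).1 ha).2⟩⟩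

theorem IsCompleteType1.setOf_mem_filter (hp : IsCompleteType1 S p) {φ : Form1 L M}
    (hφ : φ ∈ p) : {a | Realize1 S φ a} ∈ hp.filter :=
  ⟨φ, hφ, subset_rfl⟩

theorem IsCompleteType1.setOf_mem_filter_or_compl_mem (hp : IsCompleteType1 S p)
    (φ : Form1 L M) : {a | Realize1 S φ a} ∈ hp.filter ∨ ({a | Realize1 S φ a})ᶜ ∈ hp.filter :=
  (hp.isFinSatComplete.mem_or_not_mem φ).imp hp.setOf_mem_filter fun hn =>
    ⟨φ.not, hn, fun a ha => (realize1_not φ a).1 ha⟩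

theorem IsCompleteType1.filter_le_cofinite (hp : IsCompleteType1 S p)
    (hnp : ¬IsPrincipalType S p) : hp.filter ≤ cofinite := by
  refine le_cofinite_iff_compl_singleton_mem.2 fun a => ?_
  obtain ⟨φ, hφ, ha⟩ : ∃ φ ∈ p, ¬Realize1 S φ a := by
    by_contra! h
    exact hnp ⟨a, h⟩
  exact ⟨φ, hφ, fun b hb hba => ha (hba ▸ hb)⟩

variable [Semigroup M]

theorem IsIdempotentType.exists_realize1_leftShift_mem
    (hf : ∀ x y : M, S.funMap f ![x, y] = x * y) (hp : IsIdempotentType S f p)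
    {θ : Form1 L M} (hθ : θ ∈ p) : ∃ u, Realize1 S θ u ∧ leftShift f u θ ∈ p := by
  obtain ⟨hp, q, hq, hind, hX, hY, hXY⟩ := hp
  obtain ⟨u, hu⟩ := hind _ (hq.isFinSatComplete.inf_mem (hX θ hθ) (hXY θ hθ))
  have realize_u : ∀ a b, Realize2 S (substX u (toX θ ⊓ toXY f θ)) a b ↔
      Realize1 S θ u ∧ Realize1 S θ (u * b) := fun a b => by
    rw [realize2_substX, realize2_inf, realize2_toX, realize2_toXY hf]
  obtain ⟨⟨a, b⟩, hab⟩ := hq.isFinSatComplete.exists_realize hu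
  refine ⟨u, ((realize_u a b).1 hab).1, hp.mem_of_toY_mem hq hY ?_⟩
  refine hq.isFinSatComplete.mem_of_imp hu fun ⟨a, b⟩ h => ?_
  exact (realize2_toY _ a b).2 ((realize1_leftShift hf u θ b).2 ((realize_u a b).1 h).2)

theorem IsIdempotentType.isDIP_of_mem_filter (hf : ∀ x y : M, S.funMap f ![x, y] = x * y)
    (hp : IsIdempotentType S f p) (hnp : ¬IsPrincipalType S p) {A : Set M}
    (hA : A ∈ hp.1.filter) : IsDIP A := by
  refine Hindman.exists_injective_FP_subset_of_le_cofinite (F := hp.1.filter)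
    (fun A ⟨θ, hθ, hθA⟩ => ?_) (hp.1.filter_le_cofinite hnp) hA
  obtain ⟨u, hu, hshift⟩ := hp.exists_realize1_leftShift_mem hf hθ
  exact ⟨u, hθA hu, _, hshift, fun y hy => hθA ((realize1_leftShift hf u θ y).1 hy)⟩

end TypeFilter

/-- One binary function symbol and one unary relation symbol for each `i : ι`. -/
def mulPredLang (ι : Type) : Language where
  Functions n := PLift (n = 2)
  Relations n := PLift (n = 1) × ι

instance (ι : Type) [Countable ι] : Countable (mulPredLang ι).Symbols :=
  inferInstanceAs (Countable ((Σ n, PLift (n = 2)) ⊕ Σ n, PLift (n = 1) × ι))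

def mulSymbol (ι : Type) : (mulPredLang ι).Functions 2 := ⟨rfl⟩

def predFormula {ι : Type} {M : Type*} (i : ι) : Form1 (mulPredLang ι) M :=
  Relations.formula₁ (L := mulPredLang ι) (⟨rfl⟩, i) (Term.var (Sum.inr 0))

abbrev predStructure {ι : Type} {M : Type*} [Mul M] (A : ι → Set M) :
    (mulPredLang ι).Structure M where
  funMap {n} f v := match n, f with | _, ⟨rfl⟩ => v 0 * v 1
  RelMap {n} r v := match n, r with | _, (⟨rfl⟩, i) => v 0 ∈ A i

theorem really_hindman_of_exists_nonprincipal_idempotent_type_general {M : Type*} [Semigroup M]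
    (h : ∀ (L : FirstOrder.Language.{0, 0}), Countable L.Symbols →
      ∀ (f : L.Functions 2) (S : L.Structure M),
        (∀ x y : M, S.funMap f ![x, y] = x * y) →
        ∀ φ : Form1 L M, IsIIP {a : M | Realize1 S φ a} →
          ∃ p : Set (Form1 L M), φ ∈ p ∧ IsIdempotentType S f p ∧ ¬IsPrincipalType S p)
    (X Y Z : Set M) (hX : IsIIP X) (hXYZ : X = Y ∪ Z) : IsDIP Y ∨ IsDIP Z := by
  have hf : ∀ x y : M, (predStructure ![X, Y]).funMap (mulSymbol _) ![x, y] = x * y :=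
    fun _ _ => rfl
  obtain ⟨p, hXp, hp, hnp⟩ := h _ inferInstance _ _ hf (predFormula 0) hX
  have hXF : X ∈ hp.1.filter := hp.1.setOf_mem_filter hXp
  rcases hp.1.setOf_mem_filter_or_compl_mem (predFormula 1) with hY | hY
  · exact .inl (hp.isDIP_of_mem_filter hf hnp hY)
  · refine .inr (hp.isDIP_of_mem_filter hf hnp (mem_of_superset (inter_mem hXF hY) ?_))
    rintro a ⟨haX, haY⟩
    exact (hXYZ ▸ haX : a ∈ Y ∪ Z).resolve_left haY

/-- if for every semigroup structure based on the countable semigroup `(M, ·)`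
in a countable language every definable IIP set is contained in some nonprincipal idempotent
complete 1-type, then `(M, ·)` is really Hindman: whenever `X` is IIP and `X = Y ∪ Z`, one of
`Y`, `Z` is DIP. -/
theorem really_hindman_of_exists_nonprincipal_idempotent_type {M : Type*} [Semigroup M]
    [Countable M]
    (h : ∀ (L : FirstOrder.Language.{0, 0}), Countable L.Symbols →
      ∀ (f : L.Functions 2) (S : L.Structure M),
        (∀ x y : M, S.funMap f ![x, y] = x * y) →
        ∀ φ : Form1 L M, IsIIP {a : M | Realize1 S φ a} →
          ∃ p : Set (Form1 L M), φ ∈ p ∧ IsIdempotentType S f p ∧ ¬IsPrincipalType S p)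
    (X Y Z : Set M) (hX : IsIIP X) (hXYZ : X = Y ∪ Z) : IsDIP Y ∨ IsDIP Z :=
  really_hindman_of_exists_nonprincipal_idempotent_type_general h X Y Z hX hXYZ
end
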